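/- Let G = (X ⊔ Y, E) be a finite bipartite graph and let X = X_S ⊔ X_L, Y = Y_S ⊔ Y_L be the unique partitions satisfying: (a) there are no edges between X_S and Y_L; (b) G[X_S, Y_S] is Y-path-saturated; (c) G[X_L, Y_L] admits a matching saturating X_L. Then the maximum cardinality of an envy-free matching in G equals |X_L|. -/

import Mathlib

/-! An envy-free matching `M` cannot use any vertex of `Y_S`. Indeed, let `S` be the set of
vertices of `Y_S` matched by `M`. By envy-freeness and (a), every neighbour of `S` in `X_S` is
matched into `S`, so `S` has at most `|S|` neighbours in `X_S`. But Y-path-saturation forces every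
nonempty `S ⊆ Y_S` to have strictly more than `|S|` neighbours in `X_S`: the perfect matchings
`X_i ↔ Y_i` inject `S` into its neighbourhood, and a vertex of `S` in the lowest layer `Y_i` has a
neighbour in `X_{i-1}` outside that image. Hence every edge of `M` lies in `G[X_L, Y_L]`, so
`|M| ≤ |X_L|`; conversely the matching of (c) is envy-free, since `X_S` has no edges to `Y_L`. -/

attribute [local instance] Classical.propDecidable

variable {V : Type*}

/-- `X, Y` form a bipartition of the vertex set of the simple graph `G`:
they are disjoint, cover all vertices, and every edge joins `X` to `Y`. -/
def IsBipartition [Fintype V] (G : SimpleGraph V) (X Y : Finset V) : Prop :=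
  Disjoint X Y ∧ X ∪ Y = Finset.univ ∧
    ∀ ⦃u v : V⦄, G.Adj u v → (u ∈ X ∧ v ∈ Y) ∨ (u ∈ Y ∧ v ∈ X)

/-- `M` is a matching of `G` all of whose edges go from `X'` to `Y'`
(i.e. a matching of the induced subgraph `G[X', Y']`), recorded as a set of
pairwise vertex-disjoint adjacent pairs. -/
def IsBipMatching (G : SimpleGraph V) (X' Y' : Finset V) (M : Finset (V × V)) : Prop :=
  (∀ p ∈ M, p.1 ∈ X' ∧ p.2 ∈ Y' ∧ G.Adj p.1 p.2) ∧
  ∀ p ∈ M, ∀ q ∈ M, p ≠ q → p.1 ≠ q.1 ∧ p.2 ≠ q.2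

/-- `M` is envy-free w.r.t. `X`: no unmatched vertex of `X` is adjacent to a
matched vertex on the `Y`-side of `M`. -/
def EnvyFree (G : SimpleGraph V) (X : Finset V) (M : Finset (V × V)) : Prop :=
  ∀ x ∈ X, x ∉ M.image Prod.fst → ∀ y ∈ M.image Prod.snd, ¬ G.Adj x y

/-- The (bipartite) graph `G[X ∪ Y]` is `Y`-path-saturated: for some `k ≥ 1` there are
partitions `X = X_0 ⊔ ⋯ ⊔ X_k` and `Y = Y_1 ⊔ ⋯ ⊔ Y_k` such that for `1 ≤ i ≤ k`
there is a perfect matching between `X_i` and `Y_i`, and every vertex of `Y_i` is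
adjacent to some vertex of `X_{i-1}`. -/
def YPathSaturated (G : SimpleGraph V) (X Y : Finset V) : Prop :=
  ∃ k : ℕ, 1 ≤ k ∧ ∃ A B : ℕ → Finset V,
    (∀ i ∈ Finset.range (k + 1), ∀ j ∈ Finset.range (k + 1), i ≠ j → Disjoint (A i) (A j)) ∧
    (∀ i ∈ Finset.Icc 1 k, ∀ j ∈ Finset.Icc 1 k, i ≠ j → Disjoint (B i) (B j)) ∧
    X = (Finset.range (k + 1)).biUnion A ∧
    Y = (Finset.Icc 1 k).biUnion B ∧
    (∀ i ∈ Finset.Icc 1 k, ∃ f : V → V,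
      Set.BijOn f (A i) (B i) ∧ ∀ x ∈ A i, G.Adj x (f x)) ∧
    (∀ i ∈ Finset.Icc 1 k, ∀ y ∈ B i, ∃ x ∈ A (i - 1), G.Adj x y)

open Finset

namespace IsBipMatching

variable {G : SimpleGraph V} {X' Y' : Finset V} {M : Finset (V × V)}

theorem injOn_fst (hM : IsBipMatching G X' Y' M) : Set.InjOn Prod.fst (M : Set (V × V)) :=
  fun p hp q hq h => by_contra fun hpq => (hM.2 p hp q hq hpq).1 h

theorem injOn_snd (hM : IsBipMatching G X' Y' M) : Set.InjOn Prod.snd (M : Set (V × V)) :=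
  fun p hp q hq h => by_contra fun hpq => (hM.2 p hp q hq hpq).2 h

theorem card_image_fst (hM : IsBipMatching G X' Y' M) : (M.image Prod.fst).card = M.card :=
  card_image_of_injOn hM.injOn_fst

theorem mono {X'' Y'' : Finset V} (hM : IsBipMatching G X' Y' M) (hX : X' ⊆ X'')
    (hY : Y' ⊆ Y'') : IsBipMatching G X'' Y'' M :=
  ⟨fun p hp => ⟨hX (hM.1 p hp).1, hY (hM.1 p hp).2.1, (hM.1 p hp).2.2⟩, hM.2⟩

end IsBipMatching

section Surplus

variable {G : SimpleGraph V} {XS YS : Finset V}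

theorem card_lt_card_neighbors_of_descent {g : V → V} {r : V → ℕ}
    (hg_inj : Set.InjOn g YS) (hg : ∀ y ∈ YS, g y ∈ XS ∧ G.Adj (g y) y)
    (hdesc : ∀ y ∈ YS, ∃ x ∈ XS, G.Adj x y ∧ ∀ y' ∈ YS, g y' = x → r y' < r y)
    {S : Finset V} (hS : S ⊆ YS) (hne : S.Nonempty) :
    S.card < (XS.filter fun x => ∃ y ∈ S, G.Adj x y).card := by
  by_contra! hle
  have hgS : S.image g ⊆ XS.filter fun x => ∃ y ∈ S, G.Adj x y := by
    intro x hx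
    obtain ⟨y, hy, rfl⟩ := mem_image.1 hx
    exact mem_filter.2 ⟨(hg y (hS hy)).1, y, hy, (hg y (hS hy)).2⟩
  have hcard : (S.image g).card = S.card := card_image_of_injOn (hg_inj.mono hS)
  have hN := eq_of_subset_of_card_le hgS (hcard ▸ hle)
  obtain ⟨y, hy, hmin⟩ := exists_min_image S r hne
  obtain ⟨x, hx, hxy, hlt⟩ := hdesc y (hS hy)
  have hxN : x ∈ S.image g := by rw [hN]; exact mem_filter.2 ⟨hx, y, hy, hxy⟩
  obtain ⟨y', hy', rfl⟩ := mem_image.1 hxN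
  exact (hlt y' (hS hy') rfl).not_ge (hmin y' hy')

theorem YPathSaturated.exists_descent (hb : YPathSaturated G XS YS) :
    ∃ (g : V → V) (r : V → ℕ), Set.InjOn g YS ∧ (∀ y ∈ YS, g y ∈ XS ∧ G.Adj (g y) y) ∧
      ∀ y ∈ YS, ∃ x ∈ XS, G.Adj x y ∧ ∀ y' ∈ YS, g y' = x → r y' < r y := by
  obtain ⟨k, -, A, B, hA, -, rfl, rfl, hPM, hPen⟩ := hb
  have : Nonempty (V → V) := ⟨id⟩
  choose! f hf using hPM
  have hA_eq : ∀ i ≤ k, ∀ j ≤ k, ∀ x ∈ A i, x ∈ A j → i = j := fun i hi j hj x hxi hxj =>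
    by_contra fun hij =>
      disjoint_left.1 (hA i (mem_range.2 (by omega)) j (mem_range.2 (by omega)) hij) hxi hxj
  have hpartner : ∀ y, ∃ i x, y ∈ (Icc 1 k).biUnion B →
      i ∈ Icc 1 k ∧ y ∈ B i ∧ x ∈ A i ∧ f i x = y := by
    intro y
    by_cases hy : y ∈ (Icc 1 k).biUnion B
    · obtain ⟨i, hi, hyi⟩ := mem_biUnion.1 hy
      obtain ⟨x, hx, hxy⟩ := (hf i hi).1.surjOn hyi
      exact ⟨i, x, fun _ => ⟨hi, hyi, hx, hxy⟩⟩
    · exact ⟨0, y, fun h => absurd h hy⟩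
  -- `g` inverts the layer matchings `A i → B i`, and `r y` is the layer of `y`.
  choose r g hrg using hpartner
  refine ⟨g, r, ?_, ?_, ?_⟩
  · intro y hy y' hy' h
    obtain ⟨hi, -, hx, hfy⟩ := hrg y hy
    obtain ⟨hi', -, hx', hfy'⟩ := hrg y' hy'
    have hr : r y = r y' :=
      hA_eq _ (mem_Icc.1 hi).2 _ (mem_Icc.1 hi').2 _ hx (h ▸ hx')
    calc y = f (r y) (g y) := hfy.symm
      _ = f (r y') (g y') := by rw [hr, h]
      _ = y' := hfy'
  · intro y hy
    obtain ⟨hi, -, hx, hfy⟩ := hrg y hy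
    refine ⟨mem_biUnion.2 ⟨r y, mem_range.2 (Nat.lt_succ_of_le (mem_Icc.1 hi).2), hx⟩, ?_⟩
    simpa only [hfy] using (hf _ hi).2 _ hx
  · intro y hy
    obtain ⟨hi, hyB, -, -⟩ := hrg y hy
    obtain ⟨x, hx, hxy⟩ := hPen _ hi y hyB
    have hik := mem_Icc.1 hi
    refine ⟨x, mem_biUnion.2 ⟨r y - 1, mem_range.2 (by omega), hx⟩, hxy, fun y' hy' hgx => ?_⟩
    obtain ⟨hi', -, hx', -⟩ := hrg y' hy'
    have := hA_eq _ (mem_Icc.1 hi').2 _ (by omega) _ hx' (hgx ▸ hx)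
    omega

theorem YPathSaturated.card_lt_card_neighbors (hb : YPathSaturated G XS YS) {S : Finset V}
    (hS : S ⊆ YS) (hne : S.Nonempty) :
    S.card < (XS.filter fun x => ∃ y ∈ S, G.Adj x y).card := by
  obtain ⟨g, r, hg_inj, hg, hdesc⟩ := hb.exists_descent
  exact card_lt_card_neighbors_of_descent hg_inj hg hdesc hS hne

end Surplus

section EnvyFree

variable {G : SimpleGraph V} {X Y XS XL YS YL : Finset V} {M : Finset (V × V)}

theorem EnvyFree.snd_notMem (hXS : XS ⊆ X) (hY : Y ⊆ YS ∪ YL)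
    (ha : ∀ x ∈ XS, ∀ y ∈ YL, ¬ G.Adj x y) (hb : YPathSaturated G XS YS)
    (hM : IsBipMatching G X Y M) (hEF : EnvyFree G X M) : ∀ p ∈ M, p.2 ∉ YS := by
  intro p hp hpS
  set E := M.filter (·.2 ∈ YS)
  have hN : (XS.filter fun x => ∃ y ∈ E.image Prod.snd, G.Adj x y) ⊆ E.image Prod.fst := by
    intro x hx
    obtain ⟨hxS, y, hy, hxy⟩ := mem_filter.1 hx
    have hxM : x ∈ M.image Prod.fst := by
      by_contra hxM
      exact hEF x (hXS hxS) hxM y (image_subset_image (filter_subset _ _) hy) hxy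
    obtain ⟨q, hq, rfl⟩ := mem_image.1 hxM
    obtain ⟨-, hqY, hqadj⟩ := hM.1 q hq
    have hqS : q.2 ∈ YS := (mem_union.1 (hY hqY)).resolve_right (ha _ hxS _ · hqadj)
    exact mem_image_of_mem _ (mem_filter.2 ⟨hq, hqS⟩)
  have hlt := hb.card_lt_card_neighbors (S := E.image Prod.snd)
    (image_subset_iff.2 fun q hq => (mem_filter.1 hq).2)
    ⟨p.2, mem_image_of_mem _ (mem_filter.2 ⟨hp, hpS⟩)⟩
  rw [card_image_of_injOn (hM.injOn_snd.mono (filter_subset _ M))] at hlt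
  exact (hlt.trans_le ((card_le_card hN).trans card_image_le)).false

theorem EnvyFree.image_fst_subset (hX : X ⊆ XS ∪ XL) (hXS : XS ⊆ X) (hY : Y ⊆ YS ∪ YL)
    (ha : ∀ x ∈ XS, ∀ y ∈ YL, ¬ G.Adj x y) (hb : YPathSaturated G XS YS)
    (hM : IsBipMatching G X Y M) (hEF : EnvyFree G X M) : M.image Prod.fst ⊆ XL := by
  refine image_subset_iff.2 fun p hp => ?_
  obtain ⟨hpX, hpY, hpadj⟩ := hM.1 p hp
  have hpYL : p.2 ∈ YL := (mem_union.1 (hY hpY)).resolve_left (hEF.snd_notMem hXS hY ha hb hM p hp)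
  exact (mem_union.1 (hX hpX)).resolve_left (ha _ · _ hpYL hpadj)

theorem envyFree_of_image_fst_eq (hX : X ⊆ XS ∪ XL) (ha : ∀ x ∈ XS, ∀ y ∈ YL, ¬ G.Adj x y)
    (hM : IsBipMatching G XL YL M) (hfst : M.image Prod.fst = XL) : EnvyFree G X M := by
  intro x hx hxM y hy hxy
  rw [hfst] at hxM
  obtain ⟨p, hp, rfl⟩ := mem_image.1 hy
  exact ha x ((mem_union.1 (hX hx)).resolve_right hxM) p.2 (hM.1 p hp).2.1 hxy

end EnvyFree

theorem max_envy_free_card_general (G : SimpleGraph V) (X Y : Finset V)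
    (XS XL YS YL : Finset V)
    (hXunion : XS ∪ XL = X)
    (hYunion : YS ∪ YL = Y)
    (ha : ∀ x ∈ XS, ∀ y ∈ YL, ¬ G.Adj x y)
    (hb : YPathSaturated G XS YS)
    (hc : ∃ M : Finset (V × V), IsBipMatching G XL YL M ∧ XL ⊆ M.image Prod.fst) :
    (∃ M : Finset (V × V), IsBipMatching G X Y M ∧ EnvyFree G X M ∧
        M.card = XL.card) ∧
    ∀ M : Finset (V × V), IsBipMatching G X Y M → EnvyFree G X M →
      M.card ≤ XL.card := by
  subst hXunion hYunion
  obtain ⟨M, hM, hsat⟩ := hc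
  have hfst : M.image Prod.fst = XL :=
    (image_subset_iff.2 fun p hp => (hM.1 p hp).1).antisymm hsat
  refine ⟨⟨M, hM.mono subset_union_right subset_union_right,
    envyFree_of_image_fst_eq subset_rfl ha hM hfst, hfst ▸ hM.card_image_fst.symm⟩, ?_⟩
  intro M' hM' hEF
  rw [← hM'.card_image_fst]
  exact card_le_card (hEF.image_fst_subset subset_rfl subset_union_left subset_rfl ha hb hM')

/-- if `X = X_S ⊔ X_L` and `Y = Y_S ⊔ Y_L` are the (unique) partitions
satisfying (a), (b), (c), then the maximum cardinality of an envy-free matching in `G`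
equals `|X_L|`. -/
theorem max_envy_free_card [Fintype V] (G : SimpleGraph V) (X Y : Finset V)
    (hBip : IsBipartition G X Y)
    (XS XL YS YL : Finset V)
    (hXdisj : Disjoint XS XL) (hXunion : XS ∪ XL = X)
    (hYdisj : Disjoint YS YL) (hYunion : YS ∪ YL = Y)
    (ha : ∀ x ∈ XS, ∀ y ∈ YL, ¬ G.Adj x y)
    (hb : YPathSaturated G XS YS)
    (hc : ∃ M : Finset (V × V), IsBipMatching G XL YL M ∧ XL ⊆ M.image Prod.fst) :
    (∃ M : Finset (V × V), IsBipMatching G X Y M ∧ EnvyFree G X M ∧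
        M.card = XL.card) ∧
    ∀ M : Finset (V × V), IsBipMatching G X Y M → EnvyFree G X M →
      M.card ≤ XL.card :=
  max_envy_free_card_general G X Y XS XL YS YL hXunion hYunion ha hb hc
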